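/- Existence of rotation-Y tree angles: given nonnegative reals ψ_0, …, ψ_{2^n−1} with Σ_k ψ_k² = 1, there exist angles φ_{t,k} ∈ ℝ (0 ≤ t ≤ n−1, 0 ≤ k ≤ 2^t−1) such that the recursively defined tree values a_{0,0} = 1, a_{t,2k} = a_{t−1,k} cos(φ_{t−1,k}/2), a_{t,2k+1} = a_{t−1,k} sin(φ_{t−1,k}/2) satisfy a_{n,k} = ψ_k for all 0 ≤ k ≤ 2^n − 1. -/
import Mathlib


/-- Existence of rotation-Y tree angles: given nonnegative reals `ψ_0, …, ψ_{2^n−1}` with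
`Σ_k ψ_k² = 1`, there exist angles `φ_{t,k}` such that the recursively defined tree values
`a_{0,0} = 1`, `a_{t,2k} = a_{t−1,k} cos(φ_{t−1,k}/2)`, `a_{t,2k+1} = a_{t−1,k} sin(φ_{t−1,k}/2)`
satisfy `a_{n,k} = ψ_k` for all `k < 2^n`. -/
theorem rotation_y_tree_angles_exist (n : ℕ)
    (ψ : ℕ → ℝ) (hψ0 : ∀ k < 2 ^ n, 0 ≤ ψ k)
    (hψ : ∑ k ∈ Finset.range (2 ^ n), ψ k ^ 2 = 1) :
    ∃ (φ : ℕ → ℕ → ℝ) (a : ℕ → ℕ → ℝ),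
      a 0 0 = 1 ∧
      (∀ t < n, ∀ k < 2 ^ t, a (t + 1) (2 * k) = a t k * Real.cos (φ t k / 2)) ∧
      (∀ t < n, ∀ k < 2 ^ t, a (t + 1) (2 * k + 1) = a t k * Real.sin (φ t k / 2)) ∧
      ∀ k < 2 ^ n, a n k = ψ k := by
  set S : ℕ → ℕ → ℝ := fun t k =>
    ∑ j ∈ Finset.range (2 ^ (n - t)), ψ (k * 2 ^ (n - t) + j) ^ 2 with hS
  have hSnonneg : ∀ t k, 0 ≤ S t k := fun t k =>
    Finset.sum_nonneg fun j _ => sq_nonneg _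
  set a : ℕ → ℕ → ℝ := fun t k => Real.sqrt (S t k) with ha
  have hanonneg : ∀ t k, 0 ≤ a t k := fun t k => Real.sqrt_nonneg _
  have hasq : ∀ t k, a t k ^ 2 = S t k := fun t k => Real.sq_sqrt (hSnonneg t k)
  have hSsplit : ∀ t, t < n → ∀ k, S t k = S (t + 1) (2 * k) + S (t + 1) (2 * k + 1) := by
    intro t ht k
    have hnt : n - t = (n - (t + 1)) + 1 := by omega
    simp only [hS, hnt, pow_succ]
    set M := 2 ^ (n - (t + 1)) with hM
    have : M * 2 = M + M := by ring
    rw [this, Finset.sum_range_add]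
    congr 1
    · apply Finset.sum_congr rfl; intro j hj; ring_nf
    · apply Finset.sum_congr rfl; intro j hj; ring_nf
  have hpyth : ∀ t, t < n → ∀ k,
      a t k ^ 2 = a (t + 1) (2 * k) ^ 2 + a (t + 1) (2 * k + 1) ^ 2 := by
    intro t ht k
    rw [hasq, hasq, hasq, hSsplit t ht k]
  refine ⟨fun t k => 2 * Real.arccos (if a t k = 0 then 1 else a (t + 1) (2 * k) / a t k),
    a, ?_, ?_, ?_, ?_⟩
  · have : S 0 0 = 1 := by
      simp only [hS, Nat.sub_zero, Nat.zero_mul, Nat.zero_add]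
      exact hψ
    simp [ha, this]
  · intro t ht k _
    set c := (if a t k = 0 then (1:ℝ) else a (t + 1) (2 * k) / a t k) with hc
    rw [show (2:ℝ) * Real.arccos c / 2 = Real.arccos c from by ring]
    by_cases h : a t k = 0
    · simp only [hc, h, if_true]
      have : a (t + 1) (2 * k) ^ 2 = 0 := by
        have := hpyth t ht k
        nlinarith [sq_nonneg (a (t + 1) (2 * k)), sq_nonneg (a (t + 1) (2 * k + 1))]
      have := pow_eq_zero_iff (n := 2) (by norm_num) |>.mp this
      simp [this]
    · simp only [hc, h, if_false]
      have hpos : 0 < a t k := lt_of_le_of_ne (hanonneg t k) (Ne.symm h)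
      have hle : a (t + 1) (2 * k) ≤ a t k := by
        nlinarith [hpyth t ht k, sq_nonneg (a (t + 1) (2 * k + 1)), hanonneg (t+1) (2*k)]
      rw [Real.cos_arccos]
      · field_simp
      · have := hanonneg (t + 1) (2 * k)
        have := div_nonneg this hpos.le
        linarith
      · rw [div_le_one hpos]; exact hle
  · intro t ht k _
    set c := (if a t k = 0 then (1:ℝ) else a (t + 1) (2 * k) / a t k) with hc
    rw [show (2:ℝ) * Real.arccos c / 2 = Real.arccos c from by ring]
    by_cases h : a t k = 0
    · simp only [hc, h, if_true]
      have : a (t + 1) (2 * k + 1) ^ 2 = 0 := by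
        have := hpyth t ht k
        nlinarith [sq_nonneg (a (t + 1) (2 * k)), sq_nonneg (a (t + 1) (2 * k + 1))]
      have := pow_eq_zero_iff (n := 2) (by norm_num) |>.mp this
      simp [this]
    · simp only [hc, h, if_false]
      have hpos : 0 < a t k := lt_of_le_of_ne (hanonneg t k) (Ne.symm h)
      rw [Real.sin_arccos]
      have key : 1 - (a (t + 1) (2 * k) / a t k) ^ 2
          = (a (t + 1) (2 * k + 1) / a t k) ^ 2 := by
        have := hpyth t ht k
        field_simp
        nlinarith [hpyth t ht k]
      rw [key, Real.sqrt_sq (div_nonneg (hanonneg _ _) hpos.le)]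
      field_simp
  · intro k hk
    have : S n k = ψ k ^ 2 := by
      simp [hS]
    rw [ha]
    simp only [this]
    exact Real.sqrt_sq (hψ0 k hk)
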